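/- For any word v of length n−1 over {\\, /}, among the complete binary trees with interior canopy v there is a unique one, T̄max(v), admitting no valid right rotation, and a unique one, T̄min(v), admitting no valid left rotation; and every complete binary tree T̄ with interior canopy v satisfies T̄min(v) ≤ T̄ ≤ T̄max(v) in the Tamari lattice. -/

import Mathlib

/-- Complete binary trees: every vertex has 0 or 2 children
(`leaf` = external vertex, `node` = internal vertex). -/
inductive CTree where
  | leaf : CTree
  | node : CTree → CTree → CTree
deriving DecidableEq

/-- The number of internal vertices of a complete binary tree. -/
def isize : CTree → ℕ
  | .leaf => 0
  | .node l r => isize l + isize r + 1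

/-- The sequence of external edges of a complete binary tree, recorded walking clockwise
around it starting at the root: `false` = left external edge (`\`), `true` = right
external edge (`/`). -/
def extSeq : CTree → List Bool
  | .leaf => []
  | .node l r =>
      (if l = CTree.leaf then [false] else extSeq l) ++
      (if r = CTree.leaf then [true] else extSeq r)

/-- The word `c(T̄)` over `{\, /}`: the external edges of `T̄` in clockwise order,
omitting the first and the last ones (`false` = `\`, `true` = `/`). -/
def cword (t : CTree) : List Bool := ((extSeq t).drop 1).dropLast

/-- One-hole contexts, locating a vertex in a complete binary tree. -/
inductive Ctx where
  | hole : Ctx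
  | left : Ctx → CTree → Ctx
  | right : CTree → Ctx → Ctx

/-- Fill the hole of a context with a tree. -/
def Ctx.fill : Ctx → CTree → CTree
  | .hole, t => t
  | .left c r, t => CTree.node (c.fill t) r
  | .right l c, t => CTree.node l (c.fill t)

/-- Right rotation at some internal vertex `s` whose left child `t` is internal, with
`A`, `B` the left and right subtrees of `t` and `C` the right subtree of `s`: after the
rotation, `t` becomes the right child of `s`, `A` the left subtree of `s`, and `B`, `C`
the left and right subtrees of `t`. -/
def RotStep (T T' : CTree) : Prop :=
  ∃ (K : Ctx) (A B C : CTree),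
    T = K.fill (CTree.node (CTree.node A B) C) ∧
    T' = K.fill (CTree.node A (CTree.node B C))

/-- The Tamari order on complete binary trees: the reflexive-transitive closure of the
right-rotation covering relation. -/
def TamariLe : CTree → CTree → Prop := Relation.ReflTransGen RotStep

/-- A valid right rotation: a right rotation whose subtree `B` has more than one vertex
(i.e. `B` is not a single external vertex); these are exactly the rotations preserving
the interior canopy.  `ValidRot T T'` means `T'` is obtained from `T` by a valid right
rotation; equivalently, `T` is obtained from `T'` by a valid left rotation. -/
def ValidRot (T T' : CTree) : Prop :=
  ∃ (K : Ctx) (A B C : CTree), B ≠ CTree.leaf ∧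
    T = K.fill (CTree.node (CTree.node A B) C) ∧
    T' = K.fill (CTree.node A (CTree.node B C))

/-!
Valid rotations preserve the sequence of external edges, and every right rotation strictly
decreases `leftMass`. So from any tree, valid right rotations lead in finitely many steps, hence
upwards in the Tamari order, to a tree with the same interior canopy that admits no valid right
rotation. Such a tree is `node (comb k) r` with `r` of the same kind, and its interior canopy
`true^k ++ (false :: cword r)` determines `k` and then `r`; so it is unique, and it lies above
every tree with that canopy. Mirroring reverses valid rotations and turns the canopy `v` into
`v.reverse.map not`, which gives the statements about left rotations.
-/

open CTree Relation

theorem List.replicate_append_cancel {α : Type*} {a : α} :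
    ∀ {k k' : ℕ} {l l' : List α}, l.head? ≠ some a → l'.head? ≠ some a →
      List.replicate k a ++ l = List.replicate k' a ++ l' → k = k' ∧ l = l'
  | 0, 0, _, _, _, _, h => ⟨rfl, h⟩
  | 0, _ + 1, _, _, hl, _, h => by
    simp only [List.replicate_zero, List.nil_append, List.replicate_succ, List.cons_append] at h
    simp [h] at hl
  | _ + 1, 0, _, _, _, hl', h => by
    simp only [List.replicate_zero, List.nil_append, List.replicate_succ, List.cons_append] at h
    simp [← h] at hl'
  | _ + 1, _ + 1, _, _, hl, hl', h => by
    simp only [List.replicate_succ, List.cons_append, List.cons.injEq, true_and] at h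
    obtain ⟨rfl, rfl⟩ := List.replicate_append_cancel hl hl' h
    exact ⟨rfl, rfl⟩

def NoValidRightRot (T : CTree) : Prop := ∀ T', ¬ ValidRot T T'

def NoValidLeftRot (T : CTree) : Prop := ∀ T', ¬ ValidRot T' T

theorem exists_extSeq_eq_cons_append {t : CTree} (ht : t ≠ leaf) :
    ∃ w, extSeq t = false :: w ++ [true] := by
  induction t with
  | leaf => exact absurd rfl ht
  | node l r ihl ihr =>
    have hl : ∃ a, (if l = leaf then [false] else extSeq l) = false :: a := by
      by_cases h : l = leaf
      · exact ⟨[], by simp [h]⟩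
      · obtain ⟨w, hw⟩ := ihl h
        exact ⟨w ++ [true], by simp [h, hw]⟩
    have hr : ∃ b, (if r = leaf then [true] else extSeq r) = b ++ [true] := by
      by_cases h : r = leaf
      · exact ⟨[], by simp [h]⟩
      · obtain ⟨w, hw⟩ := ihr h
        exact ⟨false :: w, by simp [h, hw]⟩
    obtain ⟨a, ha⟩ := hl
    obtain ⟨b, hb⟩ := hr
    exact ⟨a ++ b, by simp [extSeq, ha, hb]⟩

theorem extSeq_eq_cons_cword_append {t : CTree} (ht : t ≠ leaf) :
    extSeq t = false :: cword t ++ [true] := by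
  obtain ⟨w, hw⟩ := exists_extSeq_eq_cons_append ht
  simp [cword, hw]

theorem length_extSeq {t : CTree} (ht : t ≠ leaf) : (extSeq t).length = isize t + 1 := by
  induction t with
  | leaf => exact absurd rfl ht
  | node l r ihl ihr =>
    have hl : (if l = leaf then [false] else extSeq l).length = isize l + 1 := by
      by_cases h : l = leaf <;> simp [h, ihl, isize]
    have hr : (if r = leaf then [true] else extSeq r).length = isize r + 1 := by
      by_cases h : r = leaf <;> simp [h, ihr, isize]
    simp only [extSeq, List.length_append, hl, hr, isize]
    omega

theorem isize_eq_length_cword_add_one {t : CTree} (ht : t ≠ leaf) :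
    isize t = (cword t).length + 1 := by
  have h := length_extSeq ht
  rw [extSeq_eq_cons_cword_append ht] at h
  simp only [List.cons_append, List.length_cons, List.length_append, List.length_nil] at h
  omega

namespace CTree

def leftMass : CTree → ℕ
  | leaf => 0
  | node l r => leftMass l + leftMass r + isize l

def comb : ℕ → CTree
  | 0 => leaf
  | k + 1 => node (comb k) leaf

def mirror : CTree → CTree
  | leaf => leaf
  | node l r => node (mirror r) (mirror l)

end CTree

theorem Ctx.fill_ne_leaf (K : Ctx) {t : CTree} (ht : t ≠ leaf) : K.fill t ≠ leaf := by
  cases K <;> simp [Ctx.fill, ht]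

theorem Ctx.isize_fill_congr (K : Ctx) {t t' : CTree} (h : isize t = isize t') :
    isize (K.fill t) = isize (K.fill t') := by
  induction K <;> simp_all [Ctx.fill, isize]

theorem Ctx.extSeq_fill_congr (K : Ctx) {t t' : CTree} (ht : t ≠ leaf) (ht' : t' ≠ leaf)
    (h : extSeq t = extSeq t') : extSeq (K.fill t) = extSeq (K.fill t') := by
  induction K <;> simp_all [Ctx.fill, extSeq, Ctx.fill_ne_leaf]

theorem Ctx.leftMass_fill_lt (K : Ctx) {t t' : CTree} (hs : isize t = isize t')
    (h : leftMass t < leftMass t') : leftMass (K.fill t) < leftMass (K.fill t') := by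
  induction K with
  | hole => exact h
  | left c r ih =>
    simp only [Ctx.fill, leftMass, c.isize_fill_congr hs]
    omega
  | right l c ih =>
    simp only [Ctx.fill, leftMass]
    omega

theorem RotStep.leftMass_lt {T T' : CTree} (h : RotStep T T') : leftMass T' < leftMass T := by
  obtain ⟨K, A, B, C, rfl, rfl⟩ := h
  exact K.leftMass_fill_lt (by simp only [isize]; omega) (by simp only [leftMass, isize]; omega)

theorem wellFounded_flip_rotStep : WellFounded (flip RotStep) :=
  Subrelation.wf (fun h => RotStep.leftMass_lt h) (measure leftMass).wf

theorem ValidRot.rotStep {T T' : CTree} (h : ValidRot T T') : RotStep T T' := by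
  obtain ⟨K, A, B, C, -, h₁, h₂⟩ := h
  exact ⟨K, A, B, C, h₁, h₂⟩

theorem ValidRot.extSeq_eq {T T' : CTree} (h : ValidRot T T') : extSeq T = extSeq T' := by
  obtain ⟨K, A, B, C, hB, rfl, rfl⟩ := h
  exact K.extSeq_fill_congr (by simp) (by simp) (by simp [extSeq, hB])

theorem extSeq_eq_of_reflTransGen_validRot {T T' : CTree} (h : ReflTransGen ValidRot T T') :
    extSeq T = extSeq T' := by
  induction h with
  | refl => rfl
  | tail _ hstep ih => exact ih.trans hstep.extSeq_eq

theorem exists_reflTransGen_validRot_noValidRightRot (T : CTree) :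
    ∃ Tm, ReflTransGen ValidRot T Tm ∧ NoValidRightRot Tm := by
  obtain ⟨Tm, hTm, hmin⟩ := (Subrelation.wf (fun h => ValidRot.rotStep h)
    wellFounded_flip_rotStep).has_min {T' | ReflTransGen ValidRot T T'} ⟨T, .refl⟩
  exact ⟨Tm, hTm, fun T' h => hmin T' (hTm.tail h) h⟩

theorem ValidRot.left {l l' : CTree} (r : CTree) (h : ValidRot l l') :
    ValidRot (node l r) (node l' r) := by
  obtain ⟨K, A, B, C, hB, rfl, rfl⟩ := h
  exact ⟨.left K r, A, B, C, hB, rfl, rfl⟩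

theorem ValidRot.right (l : CTree) {r r' : CTree} (h : ValidRot r r') :
    ValidRot (node l r) (node l r') := by
  obtain ⟨K, A, B, C, hB, rfl, rfl⟩ := h
  exact ⟨.right l K, A, B, C, hB, rfl, rfl⟩

theorem NoValidRightRot.left {l r : CTree} (h : NoValidRightRot (node l r)) :
    NoValidRightRot l :=
  fun _ hl => h _ (hl.left r)

theorem NoValidRightRot.right {l r : CTree} (h : NoValidRightRot (node l r)) :
    NoValidRightRot r :=
  fun _ hr => h _ (hr.right l)

theorem NoValidRightRot.exists_eq_comb {l r : CTree} (h : NoValidRightRot (node l r)) :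
    ∃ k, l = comb k := by
  induction l generalizing r with
  | leaf => exact ⟨0, rfl⟩
  | node A B ihA _ =>
    obtain rfl : B = leaf := by
      by_contra hB
      exact h _ ⟨.hole, A, B, r, hB, rfl, rfl⟩
    obtain ⟨k, rfl⟩ := ihA h.left
    exact ⟨k + 1, rfl⟩

theorem extSeq_node_comb (k : ℕ) (r : CTree) :
    extSeq (node (comb k) r) =
      false :: List.replicate k true ++ (if r = leaf then [true] else extSeq r) := by
  induction k generalizing r with
  | zero => simp [extSeq, comb]
  | succ k ih =>
    have h := ih leaf
    simp only [comb, extSeq, reduceCtorEq, if_false, if_true] at h ⊢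
    rw [h]
    simp [List.replicate_succ']

theorem cword_node_comb (k : ℕ) (r : CTree) :
    cword (node (comb k) r) =
      List.replicate k true ++ (if r = leaf then [] else false :: cword r) := by
  rw [cword, extSeq_node_comb]
  by_cases hr : r = leaf
  · simp [hr]
  · rw [if_neg hr, if_neg hr, extSeq_eq_cons_cword_append hr, List.cons_append, List.drop_one,
      List.tail_cons, ← List.append_assoc, List.dropLast_concat]

theorem NoValidRightRot.eq_of_cword_eq {T T' : CTree} (h : NoValidRightRot T)
    (h' : NoValidRightRot T') (hT : T ≠ leaf) (hT' : T' ≠ leaf) (hc : cword T = cword T') :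
    T = T' := by
  induction T generalizing T' with
  | leaf => exact absurd rfl hT
  | node l r _ ihr =>
    obtain _ | ⟨l', r'⟩ := T'
    · exact absurd rfl hT'
    obtain ⟨k, rfl⟩ := h.exists_eq_comb
    obtain ⟨k', rfl⟩ := h'.exists_eq_comb
    have head_ne : ∀ t : CTree,
        (if t = leaf then [] else false :: cword t).head? ≠ some true := by
      intro t; split <;> simp
    rw [cword_node_comb, cword_node_comb] at hc
    obtain ⟨rfl, hr⟩ := List.replicate_append_cancel (head_ne r) (head_ne r') hc
    congr 1
    rcases eq_or_ne r leaf with rfl | hr0 <;> rcases eq_or_ne r' leaf with rfl | hr0'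
    · rfl
    · simp [hr0'] at hr
    · simp [hr0] at hr
    · simp only [hr0, hr0', if_false, List.cons.injEq, true_and] at hr
      exact ihr h.right h'.right hr0 hr0' hr

theorem exists_cword_node_comb_eq (v : List Bool) : ∃ k r, cword (node (comb k) r) = v := by
  induction v with
  | nil => exact ⟨0, leaf, by simp [cword_node_comb]⟩
  | cons b v ih =>
    obtain ⟨k, r, hv⟩ := ih
    cases b
    · exact ⟨0, node (comb k) r, by simp [cword_node_comb, hv]⟩
    · exact ⟨k + 1, r, by rw [cword_node_comb, List.replicate_succ, List.cons_append,
        ← cword_node_comb, hv]⟩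

theorem cword_eq_of_extSeq_eq {T T' : CTree} (h : extSeq T = extSeq T') : cword T = cword T' := by
  rw [cword, cword, h]

theorem ne_leaf_of_extSeq_eq {T T' : CTree} (hT : T ≠ leaf) (h : extSeq T = extSeq T') :
    T' ≠ leaf := by
  rintro rfl
  simp [extSeq_eq_cons_cword_append hT, extSeq] at h

@[simp] theorem CTree.mirror_mirror (t : CTree) : t.mirror.mirror = t := by
  induction t <;> simp_all [mirror]

theorem CTree.mirror_injective : Function.Injective mirror :=
  Function.LeftInverse.injective mirror_mirror

@[simp] theorem CTree.mirror_eq_leaf {t : CTree} : t.mirror = leaf ↔ t = leaf := by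
  cases t <;> simp [mirror]

theorem extSeq_mirror (t : CTree) : extSeq t.mirror = (extSeq t).reverse.map not := by
  induction t with
  | leaf => rfl
  | node l r ihl ihr =>
    simp only [mirror, extSeq, List.reverse_append, List.map_append, mirror_eq_leaf]
    congr 1 <;> split <;> simp_all

theorem cword_mirror (t : CTree) : cword t.mirror = (cword t).reverse.map not := by
  simp [cword, extSeq_mirror, List.drop_one, List.tail_reverse, List.dropLast_reverse,
    List.map_dropLast, List.map_tail, List.tail_dropLast]

def Ctx.mirror : Ctx → Ctx
  | hole => hole
  | left c r => right r.mirror c.mirror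
  | right l c => left c.mirror l.mirror

theorem Ctx.mirror_fill (K : Ctx) (t : CTree) : K.mirror.fill t.mirror = (K.fill t).mirror := by
  induction K <;> simp_all [Ctx.mirror, Ctx.fill, CTree.mirror]

theorem ValidRot.mirror {T T' : CTree} (h : ValidRot T T') : ValidRot T'.mirror T.mirror := by
  obtain ⟨K, A, B, C, hB, rfl, rfl⟩ := h
  exact ⟨K.mirror, C.mirror, B.mirror, A.mirror, by simpa using hB,
    (K.mirror_fill _).symm, (K.mirror_fill _).symm⟩

theorem noValidRightRot_mirror_iff {T : CTree} : NoValidRightRot T.mirror ↔ NoValidLeftRot T :=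
  ⟨fun h T' hT' => h _ hT'.mirror, fun h T' hT' => h T'.mirror (by simpa using hT'.mirror)⟩

theorem NoValidLeftRot.eq_of_cword_eq {T T' : CTree} (h : NoValidLeftRot T)
    (h' : NoValidLeftRot T') (hT : T ≠ leaf) (hT' : T' ≠ leaf) (hc : cword T = cword T') :
    T = T' :=
  mirror_injective <| (noValidRightRot_mirror_iff.2 h).eq_of_cword_eq
    (noValidRightRot_mirror_iff.2 h') (by simpa using hT) (by simpa using hT')
    (by rw [cword_mirror, cword_mirror, hc])

theorem exists_reflTransGen_validRot_noValidLeftRot (T : CTree) :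
    ∃ Tm, ReflTransGen ValidRot Tm T ∧ NoValidLeftRot Tm := by
  obtain ⟨M, hM, hmax⟩ := exists_reflTransGen_validRot_noValidRightRot T.mirror
  refine ⟨M.mirror, ?_, noValidRightRot_mirror_iff.1 (by simpa using hmax)⟩
  have h := ReflTransGen.swap _ _ (hM.lift (p := flip ValidRot) mirror fun _ _ h => h.mirror)
  rwa [mirror_mirror] at h

theorem tamariLe_of_noValidRightRot {T Tmx : CTree} (hT : T ≠ leaf) (hTmx : Tmx ≠ leaf)
    (hc : cword T = cword Tmx) (hmax : NoValidRightRot Tmx) : TamariLe T Tmx := by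
  obtain ⟨Tm, hchain, hTm⟩ := exists_reflTransGen_validRot_noValidRightRot T
  have hext := extSeq_eq_of_reflTransGen_validRot hchain
  obtain rfl : Tm = Tmx := hTm.eq_of_cword_eq hmax (ne_leaf_of_extSeq_eq hT hext) hTmx
    ((cword_eq_of_extSeq_eq hext).symm.trans hc)
  exact ReflTransGen.mono (fun _ _ => ValidRot.rotStep) _ _ hchain

theorem tamariLe_of_noValidLeftRot {Tmn T : CTree} (hTmn : Tmn ≠ leaf) (hT : T ≠ leaf)
    (hc : cword Tmn = cword T) (hmin : NoValidLeftRot Tmn) : TamariLe Tmn T := by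
  obtain ⟨Tm, hchain, hTm⟩ := exists_reflTransGen_validRot_noValidLeftRot T
  have hext := (extSeq_eq_of_reflTransGen_validRot hchain).symm
  obtain rfl : Tm = Tmn := hTm.eq_of_cword_eq hmin (ne_leaf_of_extSeq_eq hT hext) hTmn
    ((cword_eq_of_extSeq_eq hext).symm.trans hc.symm)
  exact ReflTransGen.mono (fun _ _ => ValidRot.rotStep) _ _ hchain

theorem exists_noValidRightRot_cword_eq (v : List Bool) :
    ∃ T, T ≠ leaf ∧ cword T = v ∧ NoValidRightRot T := by
  obtain ⟨k, r, hv⟩ := exists_cword_node_comb_eq v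
  obtain ⟨Tm, hchain, hTm⟩ := exists_reflTransGen_validRot_noValidRightRot (node (comb k) r)
  have hext := extSeq_eq_of_reflTransGen_validRot hchain
  exact ⟨Tm, ne_leaf_of_extSeq_eq (by simp) hext, (cword_eq_of_extSeq_eq hext).symm.trans hv, hTm⟩

theorem exists_noValidLeftRot_cword_eq (v : List Bool) :
    ∃ T, T ≠ leaf ∧ cword T = v ∧ NoValidLeftRot T := by
  obtain ⟨k, r, hv⟩ := exists_cword_node_comb_eq v
  obtain ⟨Tm, hchain, hTm⟩ := exists_reflTransGen_validRot_noValidLeftRot (node (comb k) r)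
  have hext := (extSeq_eq_of_reflTransGen_validRot hchain).symm
  exact ⟨Tm, ne_leaf_of_extSeq_eq (by simp) hext, (cword_eq_of_extSeq_eq hext).symm.trans hv, hTm⟩

/-- **Proposition 10.** Among the complete binary trees with `n` internal vertices and
interior canopy `v` there is a unique one admitting no valid right rotation
(`T̄max(v)`) and a unique one admitting no valid left rotation (`T̄min(v)`); and every
complete binary tree `T̄` with interior canopy `v` satisfies
`T̄min(v) ≤ T̄ ≤ T̄max(v)` in the Tamari lattice. -/
theorem tmin_tmax (n : ℕ) (hn : 0 < n) (v : List Bool) (hv : v.length = n - 1) :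
    (∃! Tmx : CTree,
      isize Tmx = n ∧ cword Tmx = v ∧ ∀ T' : CTree, ¬ ValidRot Tmx T') ∧
    (∃! Tmn : CTree,
      isize Tmn = n ∧ cword Tmn = v ∧ ∀ T' : CTree, ¬ ValidRot T' Tmn) ∧
    (∀ T Tmn Tmx : CTree,
      isize T = n → cword T = v →
      isize Tmn = n → cword Tmn = v → (∀ T' : CTree, ¬ ValidRot T' Tmn) →
      isize Tmx = n → cword Tmx = v → (∀ T' : CTree, ¬ ValidRot Tmx T') →
      TamariLe Tmn T ∧ TamariLe T Tmx) := by
  have ne_leaf {T : CTree} (h : isize T = n) : T ≠ leaf := by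
    rintro rfl
    simp [isize] at h
    omega
  have isize_eq {T : CTree} (hT : T ≠ leaf) (hc : cword T = v) : isize T = n := by
    rw [isize_eq_length_cword_add_one hT, hc]
    omega
  refine ⟨?_, ?_, fun T Tmn Tmx hT hTv hTmn hTmnv hmin hTmx hTmxv hmax =>
    ⟨tamariLe_of_noValidLeftRot (ne_leaf hTmn) (ne_leaf hT) (hTmnv.trans hTv.symm) hmin,
      tamariLe_of_noValidRightRot (ne_leaf hT) (ne_leaf hTmx) (hTv.trans hTmxv.symm) hmax⟩⟩
  · obtain ⟨T, hT, hTv, hmax⟩ := exists_noValidRightRot_cword_eq v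
    exact ⟨T, ⟨isize_eq hT hTv, hTv, hmax⟩, fun T' ⟨hT', hT'v, hmax'⟩ =>
      NoValidRightRot.eq_of_cword_eq hmax' hmax (ne_leaf hT') hT (hT'v.trans hTv.symm)⟩
  · obtain ⟨T, hT, hTv, hmin⟩ := exists_noValidLeftRot_cword_eq v
    exact ⟨T, ⟨isize_eq hT hTv, hTv, hmin⟩, fun T' ⟨hT', hT'v, hmin'⟩ =>
      NoValidLeftRot.eq_of_cword_eq hmin' hmin (ne_leaf hT') hT (hT'v.trans hTv.symm)⟩
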